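/- arXiv:0808.3072 — 14 statements merged into one kernel-verified Lean document; each statement's English description precedes it below -/
import Mathlib

section
/- Let μ : 𝒴 → 𝒫(Z) with 𝒴 ⊆ 𝒫(Z) satisfy (μ⊆): μ(X) ⊆ X for all X ∈ 𝒴, and (μPR): X ⊆ Y implies μ(Y) ∩ X ⊆ μ(X) for X,Y ∈ 𝒴. For x ∈ Z define 𝒴ₓ := {Y ∈ 𝒴 : x ∈ Y − μ(Y)} and Πₓ := the set of choice functions f on 𝒴ₓ with f(Y) ∈ Y for each Y ∈ 𝒴ₓ. Then for U ∈ 𝒴: x ∈ μ(U) if and only if x ∈ U and there exists f ∈ Πₓ with ran(f) ∩ U = ∅. -/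
open Set

theorem mu_iff_choice_function {Z : Type*} (𝒴 : Set (Set Z)) (μ : Set Z → Set Z)
    (hsub : ∀ X ∈ 𝒴, μ X ⊆ X)
    (hPR : ∀ X ∈ 𝒴, ∀ Y ∈ 𝒴, X ⊆ Y → μ Y ∩ X ⊆ μ X)
    (U : Set Z) (hU : U ∈ 𝒴) (x : Z) :
    x ∈ μ U ↔ x ∈ U ∧ ∃ f : Set Z → Z,
      (∀ Y, Y ∈ 𝒴 ∧ x ∈ Y \ μ Y → f Y ∈ Y) ∧
      (∀ Y, Y ∈ 𝒴 ∧ x ∈ Y \ μ Y → f Y ∉ U) := by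
  constructor
  · intro hx
    have hxU : x ∈ U := hsub U hU hx
    refine ⟨hxU, ?_⟩
    haveI : Nonempty Z := ⟨x⟩
    have key : ∀ Y, Y ∈ 𝒴 ∧ x ∈ Y \ μ Y → (Y \ U).Nonempty := by
      rintro Y ⟨hY, hxY, hxnμ⟩
      by_contra h
      rw [Set.not_nonempty_iff_eq_empty, Set.diff_eq_empty] at h
      exact hxnμ (hPR Y hY U hU h ⟨hx, hxY⟩)
    classical
    refine ⟨fun Y => if h : (Y \ U).Nonempty then h.choose else Classical.arbitrary Z,
      ?_, ?_⟩
    · intro Y hY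
      have h := key Y hY
      simp only [dif_pos h]
      exact h.choose_spec.1
    · intro Y hY
      have h := key Y hY
      simp only [dif_pos h]
      exact h.choose_spec.2
  · rintro ⟨hxU, f, hf1, hf2⟩
    by_contra hx
    exact hf2 U ⟨hU, hxU, hx⟩ (hf1 U ⟨hU, hxU, hx⟩)
end

section
/- Let 𝒜 be a finite, totally ordered (by <) disjoint cover of a set A by non-empty subsets, with rg(x) the unique member of 𝒜 containing x. Let μ : 𝒴 → 𝒫(Z) satisfy (μ⊆), (μPR), and (μ𝒜): if X ∈ 𝒴, A,A' ∈ 𝒜, A < A', X ∩ A ≠ ∅ and X ∩ A' ≠ ∅, then μ(X) ∩ A' = ∅. Then for U ∈ 𝒴, if x ∈ U and there exists x' ∈ U with rg(x') < rg(x), then every choice function f ∈ Πₓ satisfies ran(f) ∩ U ≠ ∅. -/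
open Set

theorem choice_hits_U_of_lower_rank {Z ι : Type*} [Fintype ι] [LinearOrder ι]
    (rg : Z → ι) (hne : ∀ i : ι, ∃ z : Z, rg z = i)
    (𝒴 : Set (Set Z)) (μ : Set Z → Set Z)
    (hsub : ∀ X ∈ 𝒴, μ X ⊆ X)
    (hPR : ∀ X ∈ 𝒴, ∀ Y ∈ 𝒴, X ⊆ Y → μ Y ∩ X ⊆ μ X)
    (hA : ∀ X ∈ 𝒴, ∀ i j : ι, i < j → (∃ a ∈ X, rg a = i) → (∃ a ∈ X, rg a = j) →
      ∀ z ∈ μ X, rg z ≠ j)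
    (U : Set Z) (hU : U ∈ 𝒴) (x : Z) (hx : x ∈ U)
    (hlow : ∃ x' ∈ U, rg x' < rg x) :
    ∀ f : Set Z → Z, (∀ Y, Y ∈ 𝒴 ∧ x ∈ Y \ μ Y → f Y ∈ Y) →
      ∃ Y, (Y ∈ 𝒴 ∧ x ∈ Y \ μ Y) ∧ f Y ∈ U := by
  intro f hf
  obtain ⟨x', hx', hlt⟩ := hlow
  have hxnot : x ∉ μ U := fun hxm =>
    hA U hU (rg x') (rg x) hlt ⟨x', hx', rfl⟩ ⟨x, hx, rfl⟩ x hxm rfl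
  exact ⟨U, ⟨hU, hx, hxnot⟩, hf U ⟨hU, hx, hxnot⟩⟩
end

section
/- Let 𝒴 be closed under finite unions and μ : 𝒴 → 𝒫(U) satisfy (μ⊆), (μPR), (μCUM). If μ(A) ⊆ B with A, B, A∪B ∈ 𝒴, then μ(A ∪ B) = μ(B). -/
open Set

theorem mu_union_eq_of_subset {U : Type*} (𝒴 : Set (Set U)) (μ : Set U → Set U)
    (hclos : ∀ X ∈ 𝒴, ∀ Y ∈ 𝒴, X ∪ Y ∈ 𝒴)
    (hsub : ∀ X ∈ 𝒴, μ X ⊆ X)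
    (hPR : ∀ X ∈ 𝒴, ∀ Y ∈ 𝒴, X ⊆ Y → μ Y ∩ X ⊆ μ X)
    (hCUM : ∀ X ∈ 𝒴, ∀ Y ∈ 𝒴, μ X ⊆ Y → Y ⊆ X → μ Y = μ X)
    (A B : Set U) (hA : A ∈ 𝒴) (hB : B ∈ 𝒴) (hAB : A ∪ B ∈ 𝒴)
    (h : μ A ⊆ B) : μ (A ∪ B) = μ B := by
  have hsubAB : μ (A ∪ B) ⊆ B := by
    intro x hx
    have hxAB : x ∈ A ∪ B := hsub _ hAB hx
    rcases hxAB with hxA | hxB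
    · exact h (hPR A hA (A ∪ B) hAB subset_union_left ⟨hx, hxA⟩)
    · exact hxB
  exact (hCUM (A ∪ B) hAB B hB hsubAB subset_union_right).symm
end

section
/- Let 𝒴 be closed under finite unions and μ : 𝒴 → 𝒫(U) satisfy (μ⊆), (μPR), (μCUM). If μ(X) ⊆ V and V ⊆ Y (with X, Y, V, Y∪X ∈ 𝒴), then μ(Y) ∩ X ⊆ μ(V). -/
open Set

theorem mu_inter_subset_mu_mid {U : Type*} (𝒴 : Set (Set U)) (μ : Set U → Set U)
    (hclos : ∀ X ∈ 𝒴, ∀ Y ∈ 𝒴, X ∪ Y ∈ 𝒴)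
    (hsub : ∀ X ∈ 𝒴, μ X ⊆ X)
    (hPR : ∀ X ∈ 𝒴, ∀ Y ∈ 𝒴, X ⊆ Y → μ Y ∩ X ⊆ μ X)
    (hCUM : ∀ X ∈ 𝒴, ∀ Y ∈ 𝒴, μ X ⊆ Y → Y ⊆ X → μ Y = μ X)
    (X Y V : Set U) (hX : X ∈ 𝒴) (hY : Y ∈ 𝒴) (hV : V ∈ 𝒴) (hYX : Y ∪ X ∈ 𝒴)
    (h1 : μ X ⊆ V) (h2 : V ⊆ Y) : μ Y ∩ X ⊆ μ V := by
  have hPRX : μ (Y ∪ X) ∩ X ⊆ μ X := hPR X hX (Y ∪ X) hYX subset_union_right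
  have hZY : μ (Y ∪ X) ⊆ Y := by
    intro z hz
    rcases hsub (Y ∪ X) hYX hz with hzY | hzX
    · exact hzY
    · exact h2 (h1 (hPRX ⟨hz, hzX⟩))
  have hEq : μ Y = μ (Y ∪ X) := hCUM (Y ∪ X) hYX Y hY hZY subset_union_left
  have hPRV : μ (Y ∪ X) ∩ V ⊆ μ V :=
    hPR V hV (Y ∪ X) hYX (h2.trans subset_union_left)
  intro z ⟨hzY, hzX⟩
  have hzZ : z ∈ μ (Y ∪ X) := hEq ▸ hzY
  exact hPRV ⟨hzZ, h1 (hPRX ⟨hzZ, hzX⟩)⟩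
end

section
/- Let 𝒴 be closed under finite unions and μ : 𝒴 → 𝒫(U) satisfy (μ⊆), (μPR), (μCUM). If μ(X) ⊆ V (X, V ∈ 𝒴), then μ(V) ∩ X ⊆ μ(X). -/
open Set

theorem mu_V_inter_subset_mu_X {U : Type*} (𝒴 : Set (Set U)) (μ : Set U → Set U)
    (hclos : ∀ X ∈ 𝒴, ∀ Y ∈ 𝒴, X ∪ Y ∈ 𝒴)
    (hsub : ∀ X ∈ 𝒴, μ X ⊆ X)
    (hPR : ∀ X ∈ 𝒴, ∀ Y ∈ 𝒴, X ⊆ Y → μ Y ∩ X ⊆ μ X)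
    (hCUM : ∀ X ∈ 𝒴, ∀ Y ∈ 𝒴, μ X ⊆ Y → Y ⊆ X → μ Y = μ X)
    (X V : Set U) (hX : X ∈ 𝒴) (hV : V ∈ 𝒴)
    (h : μ X ⊆ V) : μ V ∩ X ⊆ μ X := by
  have hW : X ∪ V ∈ 𝒴 := hclos X hX V hV
  have hPR_X : μ (X ∪ V) ∩ X ⊆ μ X :=
    hPR X hX (X ∪ V) hW (subset_union_left)
  have hWV : μ (X ∪ V) ⊆ V := by
    intro a ha
    rcases hsub _ hW ha with hx | hv
    · exact h (hPR_X ⟨ha, hx⟩)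
    · exact hv
  have heq : μ V = μ (X ∪ V) :=
    hCUM (X ∪ V) hW V hV hWV (subset_union_right)
  rw [heq]
  exact hPR_X
end

section
/- Let 𝒴 be closed under finite unions, μ : 𝒴 → 𝒫(Z) satisfy (μ⊆), (μPR), (μCUM), and define H(U) := ⋃{X ∈ 𝒴 : μ(X) ⊆ U}. If U ⊆ A (U, A ∈ 𝒴) and μ(A) ⊆ H(U), then μ(A) ⊆ U. -/
open Set

theorem mu_subset_U_of_subset_H {Z : Type*} (𝒴 : Set (Set Z)) (μ : Set Z → Set Z)
    (hclos : ∀ X ∈ 𝒴, ∀ Y ∈ 𝒴, X ∪ Y ∈ 𝒴)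
    (hsub : ∀ X ∈ 𝒴, μ X ⊆ X)
    (hPR : ∀ X ∈ 𝒴, ∀ Y ∈ 𝒴, X ⊆ Y → μ Y ∩ X ⊆ μ X)
    (hCUM : ∀ X ∈ 𝒴, ∀ Y ∈ 𝒴, μ X ⊆ Y → Y ⊆ X → μ Y = μ X)
    (U A : Set Z) (hU : U ∈ 𝒴) (hA : A ∈ 𝒴)
    (hUA : U ⊆ A) (h : μ A ⊆ ⋃₀ {X ∈ 𝒴 | μ X ⊆ U}) : μ A ⊆ U := by
  intro x hx
  obtain ⟨X, ⟨hX𝒴, hXU⟩, hxX⟩ := h hx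
  set B := X ∪ A with hB
  have hB𝒴 : B ∈ 𝒴 := hclos X hX𝒴 A hA
  -- μ B ⊆ A
  have hμBA : μ B ⊆ A := by
    intro y hy
    rcases hsub B hB𝒴 hy with hyX | hyA
    · exact hUA (hXU (hPR X hX𝒴 B hB𝒴 subset_union_left ⟨hy, hyX⟩))
    · exact hyA
  have heq : μ A = μ B := hCUM B hB𝒴 A hA hμBA subset_union_right
  have hxμX : x ∈ μ X := hPR X hX𝒴 B hB𝒴 subset_union_left ⟨heq ▸ hx, hxX⟩
  exact hXU hxμX
end

section
/- Let 𝒴 be closed under finite unions, μ : 𝒴 → 𝒫(Z) satisfy (μ⊆), (μPR), (μCUM). Let K := {x ∈ Z : ∃X ∈ 𝒴, x ∈ μ(X)}. If x ∈ K, Y ∈ 𝒴, and x ∈ Y − μ(Y), then μ(Y) ≠ ∅. -/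
open Set

theorem mu_nonempty_of_mem_K {Z : Type*} (𝒴 : Set (Set Z)) (μ : Set Z → Set Z)
    (hclos : ∀ X ∈ 𝒴, ∀ Y ∈ 𝒴, X ∪ Y ∈ 𝒴)
    (hsub : ∀ X ∈ 𝒴, μ X ⊆ X)
    (hPR : ∀ X ∈ 𝒴, ∀ Y ∈ 𝒴, X ⊆ Y → μ Y ∩ X ⊆ μ X)
    (hCUM : ∀ X ∈ 𝒴, ∀ Y ∈ 𝒴, μ X ⊆ Y → Y ⊆ X → μ Y = μ X)
    (x : Z) (hxK : ∃ X ∈ 𝒴, x ∈ μ X)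
    (Y : Set Z) (hY : Y ∈ 𝒴) (hx : x ∈ Y \ μ Y) : μ Y ≠ ∅ := by
  obtain ⟨X, hX, hxX⟩ := hxK
  intro hemp
  have hXY : X ∪ Y ∈ 𝒴 := hclos X hX Y hY
  -- μ(X∪Y) ∩ Y ⊆ μ Y = ∅
  have h1 : μ (X ∪ Y) ∩ Y ⊆ μ Y := hPR Y hY (X ∪ Y) hXY subset_union_right
  -- hence μ(X∪Y) ⊆ X
  have h2 : μ (X ∪ Y) ⊆ X := by
    intro z hz
    rcases hsub _ hXY hz with hzX | hzY
    · exact hzX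
    · exact absurd (h1 ⟨hz, hzY⟩) (by simp [hemp])
  have h3 : μ X = μ (X ∪ Y) := hCUM (X ∪ Y) hXY X hX h2 subset_union_left
  have : x ∈ μ Y := h1 ⟨h3 ▸ hxX, hx.1⟩
  exact hx.2 this
end

section
/- Let 𝒴 be closed under finite unions and μ : 𝒴 → 𝒫(Z) satisfy (μ⊆) and (μPR). If A = ⋃{Aᵢ : i ∈ I} with all Aᵢ, A ∈ 𝒴, then μ(A) ⊆ ⋃{μ(Aᵢ) : i ∈ I}. -/
open Set

theorem mu_union_subset_union_mu {Z : Type*} {I : Type*} (𝒴 : Set (Set Z))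
    (μ : Set Z → Set Z)
    (hclos : ∀ X ∈ 𝒴, ∀ Y ∈ 𝒴, X ∪ Y ∈ 𝒴)
    (hsub : ∀ X ∈ 𝒴, μ X ⊆ X)
    (hPR : ∀ X ∈ 𝒴, ∀ Y ∈ 𝒴, X ⊆ Y → μ Y ∩ X ⊆ μ X)
    (A : Set Z) (Ai : I → Set Z) (hAi : ∀ i, Ai i ∈ 𝒴) (hA : A ∈ 𝒴)
    (hcover : A = ⋃ i, Ai i) : μ A ⊆ ⋃ i, μ (Ai i) := by
  intro x hx
  have hxA : x ∈ A := hsub A hA hx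
  rw [hcover] at hxA
  obtain ⟨i, hi⟩ := mem_iUnion.mp hxA
  exact mem_iUnion.mpr ⟨i, hPR (Ai i) (hAi i) A hA (by rw [hcover]; exact subset_iUnion Ai i) ⟨hx, hi⟩⟩
end

section
/- Let 𝒴 be closed under finite unions, μ : 𝒴 → 𝒫(Z) satisfy (μ⊆), (μPR), and define H(U) := ⋃{X ∈ 𝒴 : μ(X) ⊆ U}. Then for U, Y, U∪Y ∈ 𝒴: μ(U ∪ Y) − H(U) ⊆ μ(Y). -/
open Set

theorem mu_union_diff_H_subset {Z : Type*} (𝒴 : Set (Set Z)) (μ : Set Z → Set Z)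
    (hclos : ∀ X ∈ 𝒴, ∀ Y ∈ 𝒴, X ∪ Y ∈ 𝒴)
    (hsub : ∀ X ∈ 𝒴, μ X ⊆ X)
    (hPR : ∀ X ∈ 𝒴, ∀ Y ∈ 𝒴, X ⊆ Y → μ Y ∩ X ⊆ μ X)
    (U Y : Set Z) (hU : U ∈ 𝒴) (hY : Y ∈ 𝒴) (hUY : U ∪ Y ∈ 𝒴) :
    μ (U ∪ Y) \ ⋃₀ {X ∈ 𝒴 | μ X ⊆ U} ⊆ μ Y := by
  intro z ⟨hz, hzH⟩
  have hzU : z ∉ U := fun h => hzH ⟨U, ⟨hU, hsub U hU⟩, h⟩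
  have hzY : z ∈ Y := (hsub _ hUY hz).resolve_left hzU
  exact hPR Y hY (U ∪ Y) hUY subset_union_right ⟨hz, hzY⟩
end

section
/- Let 𝒴 be closed under finite unions, μ : 𝒴 → 𝒫(Z) satisfy (μ⊆), (μPR), (μCUM), and H(U) := ⋃{X ∈ 𝒴 : μ(X) ⊆ U}. If Y ∈ 𝒴 and μ(Y) ⊆ H(U), then Y ⊆ H(U) and μ(U ∪ Y) = μ(U). -/
open Set

theorem subset_H_and_mu_union_eq {Z : Type*} (𝒴 : Set (Set Z)) (μ : Set Z → Set Z)
    (hclos : ∀ X ∈ 𝒴, ∀ Y ∈ 𝒴, X ∪ Y ∈ 𝒴)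
    (hsub : ∀ X ∈ 𝒴, μ X ⊆ X)
    (hPR : ∀ X ∈ 𝒴, ∀ Y ∈ 𝒴, X ⊆ Y → μ Y ∩ X ⊆ μ X)
    (hCUM : ∀ X ∈ 𝒴, ∀ Y ∈ 𝒴, μ X ⊆ Y → Y ⊆ X → μ Y = μ X)
    (U Y : Set Z) (hU : U ∈ 𝒴) (hY : Y ∈ 𝒴)
    (h : μ Y ⊆ ⋃₀ {X ∈ 𝒴 | μ X ⊆ U}) :
    Y ⊆ ⋃₀ {X ∈ 𝒴 | μ X ⊆ U} ∧ μ (U ∪ Y) = μ U := by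
  have hUY : U ∪ Y ∈ 𝒴 := hclos U hU Y hY
  have key : μ (U ∪ Y) ⊆ U := by
    intro z hz
    rcases hsub _ hUY hz with hzU | hzY
    · exact hzU
    · have hzμY : z ∈ μ Y :=
        hPR Y hY (U ∪ Y) hUY subset_union_right ⟨hz, hzY⟩
      obtain ⟨X, ⟨hX𝒴, hμX⟩, hzX⟩ := h hzμY
      have hUX : U ∪ X ∈ 𝒴 := hclos U hU X hX𝒴
      have h1 : μ (U ∪ X) ⊆ U := by
        intro w hw
        rcases hsub _ hUX hw with hwU | hwX
        · exact hwU
        · exact hμX (hPR X hX𝒴 (U ∪ X) hUX subset_union_right ⟨hw, hwX⟩)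
      have hUXY : (U ∪ X) ∪ Y ∈ 𝒴 := hclos _ hUX Y hY
      have h2 : μ ((U ∪ X) ∪ Y) ∩ (U ∪ X) ⊆ μ (U ∪ X) :=
        hPR (U ∪ X) hUX _ hUXY subset_union_left
      have h3 : μ ((U ∪ X) ∪ Y) ⊆ U ∪ Y := by
        intro w hw
        rcases hsub _ hUXY hw with (hwU | hwX) | hwY
        · exact Or.inl hwU
        · exact Or.inl (h1 (h2 ⟨hw, Or.inr hwX⟩))
        · exact Or.inr hwY
      have h4 : μ (U ∪ Y) = μ ((U ∪ X) ∪ Y) := by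
        refine hCUM _ hUXY _ hUY h3 ?_
        exact union_subset_union_left Y subset_union_left
      rw [h4] at hz
      exact h1 (h2 ⟨hz, Or.inr hzX⟩)
  have heq : μ (U ∪ Y) = μ U := (hCUM _ hUY U hU key subset_union_left).symm
  exact ⟨fun y hy => ⟨U ∪ Y, ⟨hUY, key⟩, Or.inr hy⟩, heq⟩
end

section
/- Let 𝒴 be closed under finite unions, μ : 𝒴 → 𝒫(Z) satisfy (μ⊆), (μPR), (μCUM), and H(U) := ⋃{X ∈ 𝒴 : μ(X) ⊆ U}. If x ∈ μ(U) and x ∈ Y − μ(Y) (U, Y ∈ 𝒴), then Y ⊄ H(U), i.e. Y is not a subset of H(U). -/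
open Set

theorem not_subset_H_of_mu_mem {Z : Type*} (𝒴 : Set (Set Z)) (μ : Set Z → Set Z)
    (hclos : ∀ X ∈ 𝒴, ∀ Y ∈ 𝒴, X ∪ Y ∈ 𝒴)
    (hsub : ∀ X ∈ 𝒴, μ X ⊆ X)
    (hPR : ∀ X ∈ 𝒴, ∀ Y ∈ 𝒴, X ⊆ Y → μ Y ∩ X ⊆ μ X)
    (hCUM : ∀ X ∈ 𝒴, ∀ Y ∈ 𝒴, μ X ⊆ Y → Y ⊆ X → μ Y = μ X)
    (U Y : Set Z) (hU : U ∈ 𝒴) (hY : Y ∈ 𝒴)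
    (x : Z) (hx : x ∈ μ U) (hxY : x ∈ Y \ μ Y) :
    ¬ Y ⊆ ⋃₀ {X ∈ 𝒴 | μ X ⊆ U} := by
  intro hH
  set D := U ∪ Y with hD
  have hDm : D ∈ 𝒴 := hclos U hU Y hY
  -- Claim: μ D ⊆ U
  have hmuDU : μ D ⊆ U := by
    intro y hy
    rcases hsub D hDm hy with hyU | hyY
    · exact hyU
    · -- y ∈ Y ⊆ H(U): get X with y ∈ X, μ X ⊆ U
      rcases hH hyY with ⟨X, ⟨hXm, hXU⟩, hyX⟩
      set E := X ∪ D with hE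
      have hEm : E ∈ 𝒴 := hclos X hXm D hDm
      have h1 : μ E ∩ X ⊆ μ X := hPR X hXm E hEm subset_union_left
      have h2 : μ E ∩ U ⊆ μ U := hPR U hU E hEm (subset_union_right.trans' subset_union_left)
      have h3 : μ E ∩ Y ⊆ μ Y := hPR Y hY E hEm (subset_union_right.trans' subset_union_right)
      have hED : μ E ⊆ D := by
        intro z hz
        rcases hsub E hEm hz with hzX | hzD
        · exact Or.inl (hXU (h1 ⟨hz, hzX⟩))
        · exact hzD
      have hmu : μ D = μ E := hCUM E hEm D hDm hED subset_union_right
      have hyE : y ∈ μ E := hmu ▸ hy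
      exact hXU (h1 ⟨hyE, hyX⟩)
  have hUD : μ U = μ D := hCUM D hDm U hU hmuDU subset_union_left
  have hxD : x ∈ μ D := hUD ▸ hx
  have : x ∈ μ Y := hPR Y hY D hDm subset_union_right ⟨hxD, hxY.1⟩
  exact hxY.2 this
end

section
/- Let 𝒴 be closed under finite unions, μ : 𝒴 → 𝒫(Z) satisfy (μ⊆), (μPR), (μCUM), and H(U) := ⋃{X ∈ 𝒴 : μ(X) ⊆ U}. If Y ∈ 𝒴 is not a subset of H(U), then μ(U ∪ Y) is not a subset of H(U), i.e. μ(U ∪ Y) − H(U) ≠ ∅. -/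
open Set

theorem mu_union_not_subset_H {Z : Type*} (𝒴 : Set (Set Z)) (μ : Set Z → Set Z)
    (hclos : ∀ X ∈ 𝒴, ∀ Y ∈ 𝒴, X ∪ Y ∈ 𝒴)
    (hsub : ∀ X ∈ 𝒴, μ X ⊆ X)
    (hPR : ∀ X ∈ 𝒴, ∀ Y ∈ 𝒴, X ⊆ Y → μ Y ∩ X ⊆ μ X)
    (hCUM : ∀ X ∈ 𝒴, ∀ Y ∈ 𝒴, μ X ⊆ Y → Y ⊆ X → μ Y = μ X)
    (U Y : Set Z) (hU : U ∈ 𝒴) (hY : Y ∈ 𝒴)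
    (h : ¬ Y ⊆ ⋃₀ {X ∈ 𝒴 | μ X ⊆ U}) :
    ¬ μ (U ∪ Y) ⊆ ⋃₀ {X ∈ 𝒴 | μ X ⊆ U} := by
  intro hcon
  have hUY : U ∪ Y ∈ 𝒴 := hclos U hU Y hY
  -- show μ (U ∪ Y) ⊆ U
  have key : μ (U ∪ Y) ⊆ U := by
    intro x hx
    obtain ⟨X, ⟨hX𝒴, hμX⟩, hxX⟩ := hcon hx
    set A := X ∪ U with hA
    have hA𝒴 : A ∈ 𝒴 := hclos X hX𝒴 U hU
    have hμA : μ A ⊆ U := by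
      intro z hz
      rcases hsub A hA𝒴 hz with hzX | hzU
      · exact hμX (hPR X hX𝒴 A hA𝒴 subset_union_left ⟨hz, hzX⟩)
      · exact hzU
    set T := A ∪ (U ∪ Y) with hT
    have hT𝒴 : T ∈ 𝒴 := hclos A hA𝒴 (U ∪ Y) hUY
    have hμTA : μ T ∩ A ⊆ μ A := hPR A hA𝒴 T hT𝒴 subset_union_left
    have hμT : μ T ⊆ U ∪ Y := by
      intro z hz
      rcases hsub T hT𝒴 hz with hzA | hzUY
      · exact Or.inl (hμA (hμTA ⟨hz, hzA⟩))
      · exact hzUY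
    have heq : μ (U ∪ Y) = μ T :=
      hCUM T hT𝒴 (U ∪ Y) hUY hμT subset_union_right
    have hxT : x ∈ μ T := heq ▸ hx
    exact hμA (hμTA ⟨hxT, Or.inl hxX⟩)
  exact h (fun y hy => ⟨U ∪ Y, ⟨hUY, key⟩, Or.inr hy⟩)
end

section
/- Let 𝒴 be closed under finite unions, μ : 𝒴 → 𝒫(Z) satisfy (μ⊆), (μPR), (μCUM). For x ∈ Z let 𝒲ₓ := {μ(Y) : Y ∈ 𝒴, x ∈ Y − μ(Y)} and Γₓ the set of choice functions on 𝒲ₓ. Then for U ∈ 𝒴 and x ∈ K := {z : ∃X ∈ 𝒴, z ∈ μ(X)}: x ∈ μ(U) if and only if x ∈ U and there exists f ∈ Γₓ with ran(f) ∩ H(U) = ∅, where H(U) := ⋃{X ∈ 𝒴 : μ(X) ⊆ U}. -/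
open Set

theorem mu_iff_choice_avoids_H {Z : Type*} (𝒴 : Set (Set Z)) (μ : Set Z → Set Z)
    (hclos : ∀ X ∈ 𝒴, ∀ Y ∈ 𝒴, X ∪ Y ∈ 𝒴)
    (hsub : ∀ X ∈ 𝒴, μ X ⊆ X)
    (hPR : ∀ X ∈ 𝒴, ∀ Y ∈ 𝒴, X ⊆ Y → μ Y ∩ X ⊆ μ X)
    (hCUM : ∀ X ∈ 𝒴, ∀ Y ∈ 𝒴, μ X ⊆ Y → Y ⊆ X → μ Y = μ X)
    (U : Set Z) (hU : U ∈ 𝒴) (x : Z) (hxK : ∃ X ∈ 𝒴, x ∈ μ X) :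
    x ∈ μ U ↔ x ∈ U ∧ ∃ f : Set Z → Z,
      (∀ W, W ∈ {W | ∃ Y ∈ 𝒴, x ∈ Y \ μ Y ∧ W = μ Y} → f W ∈ W) ∧
      (∀ W, W ∈ {W | ∃ Y ∈ 𝒴, x ∈ Y \ μ Y ∧ W = μ Y} →
        f W ∉ ⋃₀ {X ∈ 𝒴 | μ X ⊆ U}) := by
  -- key lemma: if X, V ∈ 𝒴 and μ X ⊆ V then μ (X ∪ V) = μ V
  have key : ∀ X ∈ 𝒴, ∀ V ∈ 𝒴, μ X ⊆ V → μ (X ∪ V) = μ V := by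
    intro X hX V hV hXV
    have hXU : X ∪ V ∈ 𝒴 := hclos X hX V hV
    have h1 : μ (X ∪ V) ⊆ V := by
      intro w hw
      rcases hsub _ hXU hw with hwX | hwV
      · exact hXV (hPR X hX (X ∪ V) hXU subset_union_left ⟨hw, hwX⟩)
      · exact hwV
    exact (hCUM (X ∪ V) hXU V hV h1 subset_union_right).symm
  have _inst : Nonempty Z := ⟨x⟩
  constructor
  · intro hxμU
    refine ⟨hsub U hU hxμU, fun W => Classical.epsilon (fun z => z ∈ W ∧ z ∉ ⋃₀ {X ∈ 𝒴 | μ X ⊆ U}), ?_⟩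
    have hstep : ∀ W ∈ {W | ∃ Y ∈ 𝒴, x ∈ Y \ μ Y ∧ W = μ Y},
        ∃ z, z ∈ W ∧ z ∉ ⋃₀ {X ∈ 𝒴 | μ X ⊆ U} := by
      rintro W ⟨Y, hY, ⟨hxY, hxnμY⟩, rfl⟩
      have hYU : Y ∪ U ∈ 𝒴 := hclos Y hY U hU
      -- μ (Y ∪ U) is not contained in U
      have hnotsub : ¬ μ (Y ∪ U) ⊆ U := by
        intro hcon
        have := hCUM (Y ∪ U) hYU U hU hcon subset_union_right
        have hxYU : x ∈ μ (Y ∪ U) := this ▸ hxμU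
        exact hxnμY (hPR Y hY (Y ∪ U) hYU subset_union_left ⟨hxYU, hxY⟩)
      rcases not_subset.mp hnotsub with ⟨z, hzμ, hznU⟩
      have hzY : z ∈ Y := (hsub _ hYU hzμ).resolve_right hznU
      refine ⟨z, hPR Y hY (Y ∪ U) hYU subset_union_left ⟨hzμ, hzY⟩, ?_⟩
      rintro ⟨X, ⟨hX, hXU⟩, hzX⟩
      -- z ∈ μ (Y ∪ U), z ∈ X, μ X ⊆ Y ∪ U ⟹ z ∈ μ X ⊆ U, contradiction
      have hXsub : μ X ⊆ Y ∪ U := hXU.trans subset_union_right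
      have hzμX : z ∈ μ X := by
        have := key X hX (Y ∪ U) hYU hXsub
        exact hPR X hX (X ∪ (Y ∪ U)) (hclos X hX _ hYU) subset_union_left
          ⟨this ▸ hzμ, hzX⟩
      exact hznU (hXU hzμX)
    exact ⟨fun W hW => (Classical.epsilon_spec (hstep W hW)).1,
           fun W hW => (Classical.epsilon_spec (hstep W hW)).2⟩
  · rintro ⟨hxU, f, hf1, hf2⟩
    by_contra hxnμU
    have hW : μ U ∈ {W | ∃ Y ∈ 𝒴, x ∈ Y \ μ Y ∧ W = μ Y} := ⟨U, hU, ⟨hxU, hxnμU⟩, rfl⟩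
    exact hf2 (μ U) hW ⟨U, ⟨hU, hsub U hU⟩, hsub U hU (hf1 (μ U) hW)⟩
end

section
/- Let 𝒜 be a finite totally ordered disjoint cover with rank function rg, suppose μ satisfies (μ𝒜), and let 𝒵 = ⟨𝒳, ≺⟩ be a smooth preferential structure representing μ (μ = μ_𝒵) such that ⟨x,i⟩ ≺ ⟨y,j⟩ implies rg(x) ≤ rg(y). Define 𝒵' = ⟨𝒳, ⊑⟩ by ⟨x,i⟩ ⊑ ⟨y,j⟩ iff ⟨x,i⟩ ≺ ⟨y,j⟩ or rg(x) < rg(y). Then 𝒵' is 𝒜-ranked, 𝒵' is smooth, μ_𝒵 = μ_𝒵', and moreover if ≺ is free of cycles so is ⊑, and if ≺ is transitive so is ⊑. -/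
open Set

universe u

/-- Minimization operator of a preferential structure with copies. -/
def muStruct {Z C : Type u} (proj : C → Z) (prec : C → C → Prop)
    (X : Set Z) : Set Z :=
  {x | x ∈ X ∧ ∃ c : C, proj c = x ∧ ∀ c' : C, proj c' ∈ X → ¬ prec c' c}

/-- A copy `c` is minimal in `X` (w.r.t. `prec`). -/
def minimalIn {Z C : Type u} (proj : C → Z) (prec : C → C → Prop)
    (X : Set Z) (c : C) : Prop :=
  ∀ c' : C, proj c' ∈ X → ¬ prec c' c

/-- Smoothness of a preferential structure over the domain `𝒴`. -/
def smoothOver {Z C : Type u} (proj : C → Z) (prec : C → C → Prop)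
    (𝒴 : Set (Set Z)) : Prop :=
  ∀ X ∈ 𝒴, ∀ c : C, proj c ∈ X →
    minimalIn proj prec X c ∨
      ∃ c' : C, prec c' c ∧ proj c' ∈ X ∧ minimalIn proj prec X c'

theorem smooth_to_Aranked {Z C ι : Type u} [Fintype ι] [LinearOrder ι]
    (rg : Z → ι)
    (𝒴 : Set (Set Z)) (μ : Set Z → Set Z)
    (proj : C → Z) (prec : C → C → Prop)
    (hA : ∀ X ∈ 𝒴, ∀ i j : ι, i < j → (∃ a ∈ X, rg a = i) → (∃ a ∈ X, rg a = j) →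
      ∀ z ∈ μ X, rg z ≠ j)
    (hsmooth : smoothOver proj prec 𝒴)
    (hrep : ∀ X ∈ 𝒴, μ X = muStruct proj prec X)
    (hresp : ∀ c c' : C, prec c c' → rg (proj c) ≤ rg (proj c')) :
    -- the new relation ⊑
    let sq : C → C → Prop := fun c c' => prec c c' ∨ rg (proj c) < rg (proj c')
    -- 𝒵' is 𝒜-ranked
    (∀ c c' : C, rg (proj c) < rg (proj c') → sq c c') ∧
    -- 𝒵' is smooth
    smoothOver proj sq 𝒴 ∧
    -- 𝒵 and 𝒵' define the same minimization on the domain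
    (∀ X ∈ 𝒴, muStruct proj prec X = muStruct proj sq X) ∧
    -- cycle-freeness is preserved
    ((∀ c : C, ¬ Relation.TransGen prec c c) → (∀ c : C, ¬ Relation.TransGen sq c c)) ∧
    -- transitivity is preserved
    (Transitive prec → Transitive sq) := by
  intro sq
  have hrg_le : ∀ a b, Relation.TransGen prec a b → rg (proj a) ≤ rg (proj b) := by
    intro a b h
    induction h with
    | single h => exact hresp _ _ h
    | tail _ h ih => exact ih.trans (hresp _ _ h)
  have key : ∀ X ∈ 𝒴, ∀ c : C, proj c ∈ X → minimalIn proj prec X c →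
      minimalIn proj sq X c := by
    intro X hX c hc hmin c' hc' hsq
    rcases hsq with h | h
    · exact hmin c' hc' h
    · have hz : proj c ∈ μ X := by
        rw [hrep X hX]
        exact ⟨hc, c, rfl, hmin⟩
      exact hA X hX (rg (proj c')) (rg (proj c)) h ⟨proj c', hc', rfl⟩
        ⟨proj c, hc, rfl⟩ (proj c) hz rfl
  refine ⟨fun c c' h => Or.inr h, ?_, ?_, ?_, ?_⟩
  · intro X hX c hc
    rcases hsmooth X hX c hc with hmin | ⟨c', hp, hc', hmin⟩
    · exact Or.inl (key X hX c hc hmin)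
    · exact Or.inr ⟨c', Or.inl hp, hc', key X hX c' hc' hmin⟩
  · intro X hX
    ext z
    constructor
    · rintro ⟨hz, c, rfl, hmin⟩
      exact ⟨hz, c, rfl, key X hX c hz hmin⟩
    · rintro ⟨hz, c, rfl, hmin⟩
      exact ⟨hz, c, rfl, fun c' h hp => hmin c' h (Or.inl hp)⟩
  · intro hcf c hc
    have main : ∀ a b, Relation.TransGen sq a b →
        rg (proj a) < rg (proj b) ∨ Relation.TransGen prec a b := by
      intro a b h
      induction h with
      | single h =>
        rcases h with h | h
        · exact Or.inr (Relation.TransGen.single h)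
        · exact Or.inl h
      | tail _ h ih =>
        rcases ih with ih | ih
        · refine Or.inl ?_
          rcases h with h | h
          · exact lt_of_lt_of_le ih (hresp _ _ h)
          · exact ih.trans h
        · rcases h with h | h
          · exact Or.inr (ih.tail h)
          · exact Or.inl (lt_of_le_of_lt (hrg_le _ _ ih) h)
    rcases main c c hc with h | h
    · exact lt_irrefl _ h
    · exact hcf c h
  · intro htr a b c hab hbc
    rcases hab with h1 | h1 <;> rcases hbc with h2 | h2
    · exact Or.inl (htr h1 h2)
    · exact Or.inr (lt_of_le_of_lt (hresp _ _ h1) h2)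
    · exact Or.inr (lt_of_lt_of_le h1 (hresp _ _ h2))
    · exact Or.inr (h1.trans h2)
end
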